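/- If Γ' is a cubic graph with chromatic index 3 (a snarkless cubic graph), then its triangle-replaced graph ∇(Γ') admits a proper 3-edge-coloring in which every triangle receives all three colors. -/

import Mathlib

/-!
Label the vertex `(u, i)` of `∇(Γ')` by `i`. The edge of `∇(Γ')` replacing `uv` joins `(u, c uv)`
to `(v, c uv)`, so a proper 3-edge-colouring `c` of `Γ'` makes these labels pairwise distinct on
every neighbourhood of `∇(Γ')`. Colour the edge `xy` by `-(i + j)` in `ℤ/3`: this is the third
label on a triangle edge and the original colour `c uv` on the edge replacing `uv`. Distinct labels
on neighbourhoods make this colouring proper, and the three vertices of a triangle carry three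
distinct labels, so its three edges receive three distinct colours.
-/

open SimpleGraph

def IsProperEdgeColoring {V α : Type*} (G : SimpleGraph V) (c : Sym2 V → α) : Prop :=
  ∀ ⦃e₁ e₂ : Sym2 V⦄, e₁ ∈ G.edgeSet → e₂ ∈ G.edgeSet → e₁ ≠ e₂ →
    (∃ v, v ∈ e₁ ∧ v ∈ e₂) → c e₁ ≠ c e₂

def nabla {V : Type*} (G : SimpleGraph V) (ρ : V → V → Fin 3) : SimpleGraph (V × Fin 3) :=
  SimpleGraph.fromRel (fun x y =>
    x.1 = y.1 ∨ (G.Adj x.1 y.1 ∧ ρ x.1 y.1 = x.2 ∧ ρ y.1 x.1 = y.2))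

section NegSumColoring

variable {W : Type*}

def negSumColoring (f : W → Fin 3) : Sym2 W → Fin 3 :=
  Sym2.lift ⟨fun x y => -(f x + f y), fun x y => by simp only [add_comm]⟩

@[simp]
theorem negSumColoring_mk (f : W → Fin 3) (x y : W) :
    negSumColoring f s(x, y) = -(f x + f y) :=
  rfl

theorem isProperEdgeColoring_negSumColoring {H : SimpleGraph W} {f : W → Fin 3}
    (hf : ∀ a, Set.InjOn f (H.neighborSet a)) : IsProperEdgeColoring H (negSumColoring f) := by
  rintro e₁ e₂ he₁ he₂ hne ⟨v, hv₁, hv₂⟩ hcol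
  obtain ⟨b, rfl⟩ := Sym2.mem_iff_exists.mp hv₁
  obtain ⟨q, rfl⟩ := Sym2.mem_iff_exists.mp hv₂
  have hbq : f b = f q := by simpa using hcol
  exact hne (Sym2.congr_right.mpr (hf v he₁ he₂ hbq))

theorem Fin.three_neg_add_cover {a b e : Fin 3} (hab : a ≠ b) (hbe : b ≠ e) (hae : a ≠ e)
    (i : Fin 3) : -(a + b) = i ∨ -(b + e) = i ∨ -(a + e) = i := by
  revert a b e i; decide

theorem negSumColoring_triangle {H : SimpleGraph W} {f : W → Fin 3}
    (hf : ∀ a, Set.InjOn f (H.neighborSet a)) {x y z : W}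
    (hxy : H.Adj x y) (hyz : H.Adj y z) (hxz : H.Adj x z) (i : Fin 3) :
    negSumColoring f s(x, y) = i ∨ negSumColoring f s(y, z) = i ∨
      negSumColoring f s(x, z) = i := by
  have hfxy : f x ≠ f y := fun h => hxy.ne (hf z hxz.symm hyz.symm h)
  have hfyz : f y ≠ f z := fun h => hyz.ne (hf x hxy hxz h)
  have hfxz : f x ≠ f z := fun h => hxz.ne (hf y hxy.symm hyz h)
  simpa using Fin.three_neg_add_cover hfxy hfyz hfxz i

end NegSumColoring

section Nabla

variable {V : Type*} {G : SimpleGraph V}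

theorem nabla_adj {ρ : V → V → Fin 3} {x y : V × Fin 3} :
    (nabla G ρ).Adj x y ↔
      x ≠ y ∧ (x.1 = y.1 ∨ G.Adj x.1 y.1 ∧ ρ x.1 y.1 = x.2 ∧ ρ y.1 x.1 = y.2) := by
  rw [nabla, fromRel_adj]
  refine and_congr_right fun _ => ⟨?_, Or.inl⟩
  rintro (h | h | ⟨hadj, hy, hx⟩)
  exacts [h, Or.inl h.symm, Or.inr ⟨hadj.symm, hx, hy⟩]

theorem IsProperEdgeColoring.eq_of_adj_of_eq {c : Sym2 V → Fin 3} (hc : IsProperEdgeColoring G c)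
    {u v w : V} (hv : G.Adj u v) (hw : G.Adj u w) (h : c s(u, v) = c s(u, w)) : v = w := by
  by_contra hvw
  exact hc hv hw (mt Sym2.congr_right.mp hvw) ⟨u, Sym2.mem_mk_left u v, Sym2.mem_mk_left u w⟩ h

theorem nabla_adj_of_fst_ne {c : Sym2 V → Fin 3} {a b : V × Fin 3}
    (h : (nabla G fun u v => c s(u, v)).Adj a b) (hne : a.1 ≠ b.1) :
    G.Adj a.1 b.1 ∧ c s(a.1, b.1) = a.2 ∧ b.2 = a.2 := by
  obtain ⟨-, hfib | ⟨hadj, ha, hb⟩⟩ := nabla_adj.mp h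
  · exact absurd hfib hne
  · exact ⟨hadj, ha, by rw [← hb, Sym2.eq_swap, ha]⟩

theorem IsProperEdgeColoring.injOn_snd_nabla_neighborSet {c : Sym2 V → Fin 3}
    (hc : IsProperEdgeColoring G c) (a : V × Fin 3) :
    Set.InjOn Prod.snd ((nabla G fun u v => c s(u, v)).neighborSet a) := by
  have snd_ne_of_fst_eq : ∀ {b}, (nabla G fun u v => c s(u, v)).Adj a b → a.1 = b.1 → b.2 ≠ a.2 :=
    fun h hfib hsnd => (nabla_adj.mp h).1 (Prod.ext hfib hsnd.symm)
  intro b hb q hq hbq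
  by_cases hb₁ : a.1 = b.1 <;> by_cases hq₁ : a.1 = q.1
  · exact Prod.ext (hb₁.symm.trans hq₁) hbq
  · exact absurd (hbq.trans (nabla_adj_of_fst_ne hq hq₁).2.2) (snd_ne_of_fst_eq hb hb₁)
  · exact absurd (hbq.symm.trans (nabla_adj_of_fst_ne hb hb₁).2.2) (snd_ne_of_fst_eq hq hq₁)
  · obtain ⟨hGb, hcb, -⟩ := nabla_adj_of_fst_ne hb hb₁
    obtain ⟨hGq, hcq, -⟩ := nabla_adj_of_fst_ne hq hq₁
    exact Prod.ext (hc.eq_of_adj_of_eq hGb hGq (hcb.trans hcq.symm)) hbq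

end Nabla

theorem nabla_of_snarkless_is_egc_general {V : Type*}
    (G : SimpleGraph V)
    (c : Sym2 V → Fin 3) (hc : IsProperEdgeColoring G c) :
    ∃ c' : Sym2 (V × Fin 3) → Fin 3,
      IsProperEdgeColoring (nabla G (fun u v => c s(u, v))) c' ∧
      ∀ x y z : V × Fin 3,
        (nabla G (fun u v => c s(u, v))).Adj x y →
        (nabla G (fun u v => c s(u, v))).Adj y z →
        (nabla G (fun u v => c s(u, v))).Adj x z →
        ∀ i : Fin 3, c' s(x, y) = i ∨ c' s(y, z) = i ∨ c' s(x, z) = i :=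
  ⟨negSumColoring Prod.snd, isProperEdgeColoring_negSumColoring hc.injOn_snd_nabla_neighborSet,
    fun _ _ _ hxy hyz hxz => negSumColoring_triangle hc.injOn_snd_nabla_neighborSet hxy hyz hxz⟩

/-- If a cubic graph has a proper 3-edge-coloring (is snarkless), then its triangle-replaced
graph (w.r.t. the induced vertex-neighborhood labeling) admits a proper 3-edge-coloring in
which every triangle receives all three colors. -/
theorem nabla_of_snarkless_is_egc {V : Type*} [Fintype V]
    (G : SimpleGraph V) [DecidableRel G.Adj] (hcubic : G.IsRegularOfDegree 3)
    (c : Sym2 V → Fin 3) (hc : IsProperEdgeColoring G c) :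
    ∃ c' : Sym2 (V × Fin 3) → Fin 3,
      IsProperEdgeColoring (nabla G (fun u v => c s(u, v))) c' ∧
      ∀ x y z : V × Fin 3,
        (nabla G (fun u v => c s(u, v))).Adj x y →
        (nabla G (fun u v => c s(u, v))).Adj y z →
        (nabla G (fun u v => c s(u, v))).Adj x z →
        ∀ i : Fin 3, c' s(x, y) = i ∨ c' s(y, z) = i ∨ c' s(x, z) = i :=
  nabla_of_snarkless_is_egc_general G c hc
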